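/- For all integers n ≥ 1 and k ≥ 1, one has 𝔅_{2n}^{(−k)} ≡ (−1)^{n−1} · 2 · 3^k + (−1)^n (4^{n−1} − 1) · 5^k (mod 7); consequently 𝔅_{2n}^{(−k)} mod 7 depends only on n mod 6 and k mod 6. -/
import Mathlib


/-- Stirling numbers of the second kind with level `s`. -/
def stirling2Lev (s : ℕ) : ℕ → ℕ → ℕ
  | 0, 0 => 1
  | 0, _ + 1 => 0
  | _ + 1, 0 => 0
  | n + 1, k + 1 => stirling2Lev s n k + (k + 1) ^ s * stirling2Lev s n (k + 1)

/-- Poly-Bernoulli numbers with level `2` and nonpositive upper index. -/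
def polyBernoulliLev2Neg (n k : ℕ) : ℤ :=
  ∑ m ∈ Finset.range (n + 1),
    (stirling2Lev 2 n m : ℤ) * (-1) ^ (n - m) * (Nat.factorial (2 * m) : ℤ)
      * (2 * m + 1 : ℤ) ^ k

lemma stirling2Lev_zero (n : ℕ) (hn : 1 ≤ n) : stirling2Lev 2 n 0 = 0 := by
  cases n with
  | zero => omega
  | succ m => rfl

lemma stirling2Lev_one (n : ℕ) (hn : 1 ≤ n) : stirling2Lev 2 n 1 = 1 := by
  induction n with
  | zero => omega
  | succ m ih =>
    cases m with
    | zero => decide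
    | succ p =>
      show stirling2Lev 2 (p + 1) 0 + 1 ^ 2 * stirling2Lev 2 (p + 1) 1 = 1
      rw [stirling2Lev_zero _ (by omega), ih (by omega)]
      norm_num

lemma stirling2Lev_two (n : ℕ) (hn : 1 ≤ n) :
    (3 : ZMod 7) * (stirling2Lev 2 n 2 : ZMod 7) = 4 ^ (n - 1) - 1 := by
  induction n with
  | zero => omega
  | succ m ih =>
    cases m with
    | zero => decide
    | succ p =>
      have hm : 1 ≤ p + 1 := by omega
      have hrec : stirling2Lev 2 (p + 1 + 1) 2
          = stirling2Lev 2 (p + 1) 1 + 2 ^ 2 * stirling2Lev 2 (p + 1) 2 := rfl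
      rw [hrec, stirling2Lev_one _ hm]
      push_cast
      rw [show (3 : ZMod 7) * (1 + 4 * (stirling2Lev 2 (p + 1) 2 : ZMod 7))
          = 3 + 4 * (3 * (stirling2Lev 2 (p + 1) 2 : ZMod 7)) by ring, ih hm,
        show p + 1 - 1 = p from rfl, pow_succ]
      ring

lemma key (n k : ℕ) (hn : 1 ≤ n) (hk : 1 ≤ k) :
    ((polyBernoulliLev2Neg n k : ZMod 7))
      = (-1) ^ (n - 1) * 2 * 3 ^ k + (-1) ^ n * ((4 : ZMod 7) ^ (n - 1) - 1) * 5 ^ k := by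
  have hsum : ((polyBernoulliLev2Neg n k : ZMod 7))
      = ∑ m ∈ Finset.range (n + 1),
          (stirling2Lev 2 n m : ZMod 7) * (-1) ^ (n - m)
            * (Nat.factorial (2 * m) : ZMod 7) * ((2 * m + 1 : ℕ) : ZMod 7) ^ k := by
    rw [polyBernoulliLev2Neg]
    push_cast
    rfl
  have hzero : ∀ m ∈ Finset.range (n + 1), m ∉ ({1, 2} : Finset ℕ) →
      (stirling2Lev 2 n m : ZMod 7) * (-1) ^ (n - m)
        * (Nat.factorial (2 * m) : ZMod 7) * ((2 * m + 1 : ℕ) : ZMod 7) ^ k = 0 := by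
    intro m _ hm
    simp only [Finset.mem_insert, Finset.mem_singleton] at hm
    push_neg at hm
    rcases Nat.lt_or_ge m 3 with h3 | h3
    · interval_cases m
      · rw [stirling2Lev_zero n hn]; push_cast; ring
      · omega
      · omega
    · rcases Nat.eq_or_lt_of_le h3 with h | h
      · subst h
        rw [show ((2 * 3 + 1 : ℕ) : ZMod 7) = 0 by decide, zero_pow (by omega), mul_zero]
      · have hdvd : (7 : ℕ) ∣ Nat.factorial (2 * m) :=
          Nat.dvd_factorial (by norm_num) (by omega)
        rw [(ZMod.natCast_eq_zero_iff _ _).mpr hdvd]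
        ring
  rcases Nat.eq_or_lt_of_le hn with rfl | h1
  · -- n = 1
    rw [hsum, Finset.sum_range_succ, Finset.sum_range_succ, Finset.sum_range_zero]
    rw [show stirling2Lev 2 1 0 = 0 from rfl, show stirling2Lev 2 1 1 = 1 from rfl]
    rw [show ((Nat.factorial (2 * 1) : ℕ) : ZMod 7) = 2 by decide,
        show ((2 * 1 + 1 : ℕ) : ZMod 7) = 3 by decide]
    push_cast
    norm_num
  · -- n ≥ 2
    have hsub : ({1, 2} : Finset ℕ) ⊆ Finset.range (n + 1) := by
      intro m hm
      simp only [Finset.mem_insert, Finset.mem_singleton] at hm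
      simp only [Finset.mem_range]
      omega
    rw [hsum, ← Finset.sum_subset hsub (fun m hm hnot => hzero m hm hnot)]
    rw [Finset.sum_insert (by decide), Finset.sum_singleton]
    rw [stirling2Lev_one n hn]
    rw [show ((Nat.factorial (2 * 1) : ℕ) : ZMod 7) = 2 by decide,
        show ((Nat.factorial (2 * 2) : ℕ) : ZMod 7) = 3 by decide,
        show ((2 * 1 + 1 : ℕ) : ZMod 7) = 3 by decide,
        show ((2 * 2 + 1 : ℕ) : ZMod 7) = 5 by decide]
    have hpar : ((-1 : ZMod 7)) ^ (n - 2) = (-1) ^ n := by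
      rw [pow_eq_pow_mod (n - 2) (by decide : (-1 : ZMod 7) ^ 2 = 1),
          pow_eq_pow_mod n (by decide : (-1 : ZMod 7) ^ 2 = 1)]
      congr 1 <;> omega
    rw [hpar]
    have hst := stirling2Lev_two n hn
    have e : (stirling2Lev 2 n 2 : ZMod 7) * (-1) ^ n * 3 * (5 : ZMod 7) ^ k
        = (-1) ^ n * (3 * (stirling2Lev 2 n 2 : ZMod 7)) * (5 : ZMod 7) ^ k := by
      ring
    rw [e, hst]
    ring

/-- For `n, k ≥ 1`, `𝔅_{2n}^{(−k)} ≡ (−1)^{n−1}·2·3^k + (−1)^n (4^{n−1} − 1)·5^k (mod 7)`;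
consequently `𝔅_{2n}^{(−k)} mod 7` depends only on `n mod 6` and `k mod 6`. -/
theorem stmt_16 (n k : ℕ) (hn : 1 ≤ n) (hk : 1 ≤ k) :
    polyBernoulliLev2Neg n k ≡
        (-1) ^ (n - 1) * 2 * 3 ^ k + (-1) ^ n * ((4 : ℤ) ^ (n - 1) - 1) * 5 ^ k [ZMOD 7] ∧
    ∀ n' k' : ℕ, 1 ≤ n' → 1 ≤ k' → n % 6 = n' % 6 → k % 6 = k' % 6 →
      polyBernoulliLev2Neg n k ≡ polyBernoulliLev2Neg n' k' [ZMOD 7] := by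
  constructor
  · have := (ZMod.intCast_eq_intCast_iff (polyBernoulliLev2Neg n k)
      ((-1) ^ (n - 1) * 2 * 3 ^ k + (-1) ^ n * ((4 : ℤ) ^ (n - 1) - 1) * 5 ^ k) 7).mp
      (by push_cast; exact key n k hn hk)
    exact_mod_cast this
  · intro n' k' hn' hk' h6n h6k
    have : ((polyBernoulliLev2Neg n k : ZMod 7)) = (polyBernoulliLev2Neg n' k' : ZMod 7) := by
      rw [key n k hn hk, key n' k' hn' hk']
      have h1 : ((-1 : ZMod 7)) ^ (n - 1) = (-1) ^ (n' - 1) := by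
        rw [pow_eq_pow_mod (n - 1) (by decide : (-1 : ZMod 7) ^ 6 = 1),
            pow_eq_pow_mod (n' - 1) (by decide : (-1 : ZMod 7) ^ 6 = 1)]
        congr 1 <;> omega
      have h2 : ((-1 : ZMod 7)) ^ n = (-1) ^ n' := by
        rw [pow_eq_pow_mod n (by decide : (-1 : ZMod 7) ^ 6 = 1),
            pow_eq_pow_mod n' (by decide : (-1 : ZMod 7) ^ 6 = 1)]
        congr 1 <;> omega
      have h3 : ((4 : ZMod 7)) ^ (n - 1) = 4 ^ (n' - 1) := by
        rw [pow_eq_pow_mod (n - 1) (by decide : (4 : ZMod 7) ^ 6 = 1),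
            pow_eq_pow_mod (n' - 1) (by decide : (4 : ZMod 7) ^ 6 = 1)]
        congr 1 <;> omega
      have h4 : ((3 : ZMod 7)) ^ k = 3 ^ k' := by
        rw [pow_eq_pow_mod k (by decide : (3 : ZMod 7) ^ 6 = 1),
            pow_eq_pow_mod k' (by decide : (3 : ZMod 7) ^ 6 = 1)]
        congr 1 <;> omega
      have h5 : ((5 : ZMod 7)) ^ k = 5 ^ k' := by
        rw [pow_eq_pow_mod k (by decide : (5 : ZMod 7) ^ 6 = 1),
            pow_eq_pow_mod k' (by decide : (5 : ZMod 7) ^ 6 = 1)]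
        congr 1 <;> omega
      rw [h1, h2, h3, h4, h5]
    exact_mod_cast (ZMod.intCast_eq_intCast_iff _ _ 7).mp this
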